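/- Let μ > 0 and suppose f: X × ℝⁿ → ℝ is such that for each parameter p, f(·, p) is μ-strongly concave on a convex compact set X ⊆ ℝᵐ, and |f(x, p₁) − f(x, p₂)| ≤ B‖p₁ − p₂‖ + e for all x ∈ X. Let x*(p) = argmax_{x∈X} f(x,p). Then ‖x*(p₁) − x*(p₂)‖² ≤ (2/μ)(2B‖p₁ − p₂‖ + 2e). -/
import Mathlib

/-- At a maximizer of a strongly concave function, we gain a quadratic term. -/
lemma strong_concave_max_gap {m : ℕ} {X : Set (EuclideanSpace ℝ (Fin m))} {μ : ℝ}
    {g : EuclideanSpace ℝ (Fin m) → ℝ} (hg : StrongConcaveOn X μ g)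
    {x y : EuclideanSpace ℝ (Fin m)} (hx : x ∈ X) (hy : y ∈ X)
    (hmax : ∀ z ∈ X, g z ≤ g x) :
    g y + μ / 2 * ‖x - y‖ ^ 2 ≤ g x := by
  set C := μ / 2 * ‖x - y‖ ^ 2 with hC
  have key : ∀ a ∈ Set.Ioo (0:ℝ) 1, g y + a * C ≤ g x := by
    intro a ha
    obtain ⟨ha0, ha1⟩ := ha
    have hb0 : (0:ℝ) < 1 - a := by linarith
    have hcomb := hg.2 hx hy ha0.le hb0.le (by ring)
    have hmem : a • x + (1 - a) • y ∈ X := hg.1 hx hy ha0.le hb0.le (by ring)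
    have h2 := (hcomb.trans (hmax _ hmem))
    -- h2 : a • g x + (1-a) • g y + a * (1-a) * C ≤ g x
    have h3 : (1 - a) * g y + a * (1 - a) * C ≤ (1 - a) * g x := by
      simp only [smul_eq_mul] at h2; rw [hC]; nlinarith [h2]
    nlinarith [h3]
  have hlim : Filter.Tendsto (fun a : ℝ => g y + a * C) (nhdsWithin 1 (Set.Ioo 0 1))
      (nhds (g y + 1 * C)) := by
    apply Filter.Tendsto.mono_left _ nhdsWithin_le_nhds
    exact (tendsto_const_nhds.add ((continuous_id.mul continuous_const).tendsto 1))
  haveI : (nhdsWithin (1:ℝ) (Set.Ioo 0 1)).NeBot := right_nhdsWithin_Ioo_neBot (by norm_num)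
  have : g y + 1 * C ≤ g x := by
    refine le_of_tendsto hlim ?_
    filter_upwards [self_mem_nhdsWithin] with a ha using key a ha
  linarith

/-- Perturbation stability of strongly concave maximization: if `f(·,p)` is
`μ`-strongly concave on a convex compact `X` and `|f(x,p₁) − f(x,p₂)| ≤ B‖p₁−p₂‖ + e`
uniformly on `X`, then the maximizers satisfy
`‖x*(p₁) − x*(p₂)‖² ≤ (2/μ)(2B‖p₁−p₂‖ + 2e)`. -/
theorem stmt_10 (m n : ℕ) (μ B e : ℝ) (hμ : 0 < μ) (hB : 0 ≤ B) (he : 0 ≤ e)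
    (X : Set (EuclideanSpace ℝ (Fin m))) (hXc : IsCompact X) (hXconv : Convex ℝ X)
    (f : EuclideanSpace ℝ (Fin m) → EuclideanSpace ℝ (Fin n) → ℝ)
    (p₁ p₂ : EuclideanSpace ℝ (Fin n))
    (hconc : ∀ p, StrongConcaveOn X μ (fun x => f x p))
    (hpert : ∀ x ∈ X, |f x p₁ - f x p₂| ≤ B * ‖p₁ - p₂‖ + e)
    (x₁ x₂ : EuclideanSpace ℝ (Fin m)) (hx₁ : x₁ ∈ X) (hx₂ : x₂ ∈ X)
    (hmax₁ : ∀ x ∈ X, f x p₁ ≤ f x₁ p₁) (hmax₂ : ∀ x ∈ X, f x p₂ ≤ f x₂ p₂) :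
    ‖x₁ - x₂‖ ^ 2 ≤ (2 / μ) * (2 * B * ‖p₁ - p₂‖ + 2 * e) := by
  have h1 := strong_concave_max_gap (hconc p₁) hx₁ hx₂ hmax₁
  have h2 := strong_concave_max_gap (hconc p₂) hx₂ hx₁ hmax₂
  have e1 := abs_le.mp (hpert x₁ hx₁)
  have e2 := abs_le.mp (hpert x₂ hx₂)
  have hnorm : ‖x₂ - x₁‖ = ‖x₁ - x₂‖ := norm_sub_rev _ _
  rw [hnorm] at h2
  have hμd : μ * ‖x₁ - x₂‖ ^ 2 ≤ 2 * B * ‖p₁ - p₂‖ + 2 * e := by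
    nlinarith [e1.1, e1.2, e2.1, e2.2]
  rw [div_mul_eq_mul_div, le_div_iff₀ hμ]
  nlinarith [sq_nonneg ‖x₁ - x₂‖, norm_nonneg (p₁ - p₂)]
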